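/- arXiv:1801.07597 — 2 statements merged into one kernel-verified Lean document; each statement's English description precedes it below -/
import Mathlib

section
/- Let $a_1,\ldots,a_n, b_1,\ldots,b_n$ be real numbers with the $b_i$ distinct, and suppose the function $h(t)=a_1 t^{b_1}+\cdots+a_n t^{b_n}$ has exactly $n-1$ zeroes in $(0,\infty)$ and is not identically zero. Then every zero of $h$ in $(0,\infty)$ is a sign change point of $h$ (i.e., $h$ takes both positive and negative values in every neighborhood of each zero). -/
/-!
Multiplying by `t^{-b₀}` does not move the zeroes in `(0,∞)` and turns `h` into a sum
`g` whose derivative is again a sum of `n - 1` powers with distinct exponents. By Rolle's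
theorem, between consecutive zeroes of `g` lies a zero of `g'`; induction on `n` then bounds
the number of zeroes by `n - 1`. A zero `t₀` of `h` without sign change is a local extremum of
`g`, so `g'(t₀) = 0` as well; since `t₀` is a zero of `g`, it is not one of the Rolle points, so
`g'` would have `n - 1` zeroes, which the bound forbids.
-/

open Real Set Filter Topology

noncomputable section

variable {n : ℕ}

def rpowSum (a b : Fin n → ℝ) (t : ℝ) : ℝ := ∑ i, a i * t ^ b i

/-- `(t^{-b₀} ∑ aᵢ t^{bᵢ})'` has these coefficients and exponents: the `i = 0` term is constant
and drops out. -/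
def shiftedDerivCoeff (a b : Fin (n + 1) → ℝ) : Fin n → ℝ :=
  fun i => a i.succ * (b i.succ - b 0)

def shiftedDerivExp (b : Fin (n + 1) → ℝ) : Fin n → ℝ :=
  fun i => b i.succ - b 0 - 1

lemma shiftedDerivExp_injective {b : Fin (n + 1) → ℝ} (hb : Function.Injective b) :
    Function.Injective (shiftedDerivExp b) := fun i j hij =>
  Fin.succ_injective _ (hb (by simpa [shiftedDerivExp] using hij))

@[simp]
lemma rpowSum_zero (a b : Fin 0 → ℝ) (t : ℝ) : rpowSum a b t = 0 := by
  simp [rpowSum]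

lemma rpowSum_sub_const (a b : Fin n → ℝ) (c : ℝ) {t : ℝ} (ht : 0 < t) :
    rpowSum a (fun i => b i - c) t = t ^ (-c) * rpowSum a b t := by
  simp only [rpowSum, Finset.mul_sum, rpow_sub ht, rpow_neg ht.le]
  exact Finset.sum_congr rfl fun i _ => by ring

lemma rpowSum_sub_const_eq_zero_iff (a b : Fin n → ℝ) (c : ℝ) {t : ℝ} (ht : 0 < t) :
    rpowSum a (fun i => b i - c) t = 0 ↔ rpowSum a b t = 0 := by
  rw [rpowSum_sub_const a b c ht, mul_eq_zero, or_iff_right (rpow_pos_of_pos ht _).ne']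

lemma hasDerivAt_rpowSum (a b : Fin n → ℝ) {t : ℝ} (ht : 0 < t) :
    HasDerivAt (rpowSum a b) (rpowSum (fun i => a i * b i) (fun i => b i - 1) t) t := by
  refine (HasDerivAt.fun_sum (u := Finset.univ) fun i _ =>
    (hasDerivAt_rpow_const (p := b i) (Or.inl ht.ne')).const_mul (a i)).congr_deriv ?_
  exact Finset.sum_congr rfl fun i _ => by ring

lemma hasDerivAt_rpowSum_sub_first (a b : Fin (n + 1) → ℝ) {t : ℝ} (ht : 0 < t) :
    HasDerivAt (rpowSum a fun i => b i - b 0)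
      (rpowSum (shiftedDerivCoeff a b) (shiftedDerivExp b) t) t := by
  convert hasDerivAt_rpowSum a (fun i => b i - b 0) ht using 1
  simp [rpowSum, Fin.sum_univ_succ, shiftedDerivCoeff, shiftedDerivExp]

/-- Otherwise the shifted sum would be constant on `(0,∞)`. -/
lemma exists_rpowSum_shiftedDeriv_ne_zero {a b : Fin (n + 1) → ℝ}
    (hnz : ∃ t > 0, rpowSum a b t ≠ 0) (hz : ∃ t > 0, rpowSum a b t = 0) :
    ∃ t > 0, rpowSum (shiftedDerivCoeff a b) (shiftedDerivExp b) t ≠ 0 := by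
  obtain ⟨t₁, ht₁, hne⟩ := hnz
  obtain ⟨t₀, ht₀, hzero⟩ := hz
  by_contra! hderiv
  have hconst := isOpen_Ioi.is_const_of_deriv_eq_zero isPreconnected_Ioi
    (fun t ht => (hasDerivAt_rpowSum_sub_first a b ht).differentiableAt.differentiableWithinAt)
    (fun t ht => (hasDerivAt_rpowSum_sub_first a b ht).deriv.trans (hderiv t ht))
    (mem_Ioi.2 ht₀) (mem_Ioi.2 ht₁)
  rw [(rpowSum_sub_const_eq_zero_iff a b _ ht₀).2 hzero, eq_comm,
    rpowSum_sub_const_eq_zero_iff a b _ ht₁] at hconst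
  exact hne hconst

/-- Rolle's theorem for finitely many zeroes: the zeroes of `f'` interleave those of `f`. -/
lemma exists_finset_deriv_zero_interleaved {f f' : ℝ → ℝ} {s : Set ℝ} (hs : s.OrdConnected)
    (hf : ∀ x ∈ s, HasDerivAt f (f' x) x) (T : Finset ℝ) (hT : ∀ x ∈ T, x ∈ s ∧ f x = 0) :
    ∃ C : Finset ℝ, (∀ x ∈ C, x ∈ s ∧ f' x = 0) ∧ T.card ≤ (C \ T).card + 1 := by
  have rolle : ∀ x ∈ T, ∀ y ∈ T, x < y → ∃ c ∈ Ioo x y, f' c = 0 := by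
    intro x hx y hy hxy
    have hIcc : Icc x y ⊆ s := hs.out (hT x hx).1 (hT y hy).1
    exact exists_hasDerivAt_eq_zero hxy
      (fun z hz => (hf z (hIcc hz)).continuousAt.continuousWithinAt)
      ((hT x hx).2.trans (hT y hy).2.symm) fun z hz => hf z (hIcc (Ioo_subset_Icc_self hz))
  choose! c hc using rolle
  refine ⟨((T ×ˢ T).filter fun p => p.1 < p.2).image fun p => c p.1 p.2, ?_, ?_⟩
  · simp only [Finset.mem_image, Finset.mem_filter, Finset.mem_product]
    rintro _ ⟨⟨x, y⟩, ⟨⟨hx, hy⟩, hxy⟩, rfl⟩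
    exact ⟨hs.out (hT x hx).1 (hT y hy).1 (Ioo_subset_Icc_self (hc x hx y hy hxy).1),
      (hc x hx y hy hxy).2⟩
  · refine Finset.card_le_sdiff_of_interleaved fun x hx y hy hxy _ =>
      ⟨c x y, ?_, (hc x hx y hy hxy).1⟩
    exact Finset.mem_image.2 ⟨(x, y), by simp [hx, hy, hxy], rfl⟩

lemma exists_rpowSum_shiftedDeriv_zeros (a b : Fin (n + 1) → ℝ) (T : Finset ℝ)
    (hT : ∀ t ∈ T, 0 < t ∧ rpowSum a b t = 0) :
    ∃ C : Finset ℝ, (∀ t ∈ C, 0 < t ∧ rpowSum (shiftedDerivCoeff a b) (shiftedDerivExp b) t = 0)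
      ∧ T.card ≤ (C \ T).card + 1 :=
  exists_finset_deriv_zero_interleaved ordConnected_Ioi
    (fun _ ht => hasDerivAt_rpowSum_sub_first a b ht) T
    fun t ht => ⟨(hT t ht).1, (rpowSum_sub_const_eq_zero_iff a b _ (hT t ht).1).2 (hT t ht).2⟩

theorem card_lt_of_forall_rpowSum_eq_zero {a b : Fin n → ℝ} (hb : Function.Injective b)
    (hnz : ∃ t > 0, rpowSum a b t ≠ 0) (T : Finset ℝ) (hT : ∀ t ∈ T, 0 < t ∧ rpowSum a b t = 0) :
    T.card < n := by
  induction n generalizing T with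
  | zero => obtain ⟨t, -, ht⟩ := hnz; simp at ht
  | succ n ih =>
    obtain ⟨t₀, ht₀⟩ | hempty := T.eq_empty_or_nonempty.symm
    · obtain ⟨C, hC, hcard⟩ := exists_rpowSum_shiftedDeriv_zeros a b T hT
      have hC' := ih (shiftedDerivExp_injective hb)
        (exists_rpowSum_shiftedDeriv_ne_zero hnz ⟨t₀, hT t₀ ht₀⟩) C hC
      have := Finset.card_le_card (Finset.sdiff_subset (s := C) (t := T))
      omega
    · simp [hempty]

lemma eventually_nhds_of_forall_abs_sub_lt {p : ℝ → Prop} {t₀ ε : ℝ} (ht₀ : 0 < t₀)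
    (hε : 0 < ε) (hp : ∀ x ∈ Ioi 0, |x - t₀| < ε → p x) : ∀ᶠ x in 𝓝 t₀, p x := by
  filter_upwards [Ioi_mem_nhds ht₀, Metric.ball_mem_nhds t₀ hε] with x hx hxε
  exact hp x hx hxε

lemma isLocalExtr_rpowSum_sub_const {a b : Fin n → ℝ} (c : ℝ) {t₀ : ℝ} (ht₀ : 0 < t₀)
    (hz : rpowSum a b t₀ = 0)
    (hsign : (∀ᶠ x in 𝓝 t₀, rpowSum a b x ≤ 0) ∨ ∀ᶠ x in 𝓝 t₀, 0 ≤ rpowSum a b x) :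
    IsLocalExtr (rpowSum a fun i => b i - c) t₀ := by
  rw [IsLocalExtr, IsExtrFilter, IsMaxFilter, IsMinFilter,
    (rpowSum_sub_const_eq_zero_iff a b c ht₀).2 hz]
  refine hsign.symm.imp (fun h => ?_) fun h => ?_ <;>
  filter_upwards [h, Ioi_mem_nhds ht₀] with x hx hxpos <;>
  rw [rpowSum_sub_const a b c hxpos]
  · exact mul_nonneg (rpow_nonneg hxpos.out.le _) hx
  · exact mul_nonpos_of_nonneg_of_nonpos (rpow_nonneg hxpos.out.le _) hx

end

/-- If `h t = ∑ aᵢ t^{bᵢ}` (distinct real exponents) is not identically zero on `(0,∞)` and has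
exactly `n-1` zeroes there, then every zero in `(0,∞)` is a sign change point of `h`. -/
theorem stmt_1 (n : ℕ) (a b : Fin n → ℝ) (hb : Function.Injective b)
    (h : ℝ → ℝ) (hh : ∀ t, h t = ∑ i, a i * t ^ (b i))
    (hnz : ∃ t ∈ Set.Ioi (0:ℝ), h t ≠ 0)
    (S : Finset ℝ) (hS : (S : Set ℝ) = {t ∈ Set.Ioi (0:ℝ) | h t = 0})
    (hcard : S.card = n - 1) :
    ∀ t₀ ∈ Set.Ioi (0:ℝ), h t₀ = 0 →
      ∀ ε > 0, (∃ x ∈ Set.Ioi (0:ℝ), |x - t₀| < ε ∧ 0 < h x) ∧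
        (∃ x ∈ Set.Ioi (0:ℝ), |x - t₀| < ε ∧ h x < 0) := by
  obtain rfl : h = rpowSum a b := funext hh
  intro t₀ ht₀ hz ε hε
  obtain ⟨m, rfl⟩ : ∃ m, n = m + 1 :=
    Nat.exists_eq_succ_of_ne_zero fun hn => by subst hn; simp at hnz
  have hS_spec : ∀ t ∈ S, 0 < t ∧ rpowSum a b t = 0 := fun t ht => by
    simpa [hS] using Finset.mem_coe.2 ht
  have ht₀S : t₀ ∈ S := by simpa [← Finset.mem_coe, hS] using And.intro ht₀ hz
  by_contra hsign
  have hextr := isLocalExtr_rpowSum_sub_const (b 0) ht₀ hz <| (not_and_or.1 hsign).imp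
    (fun hpos => eventually_nhds_of_forall_abs_sub_lt ht₀ hε (by simpa using hpos))
    (fun hneg => eventually_nhds_of_forall_abs_sub_lt ht₀ hε (by simpa using hneg))
  have hderiv_t₀ := hextr.hasDerivAt_eq_zero (hasDerivAt_rpowSum_sub_first a b ht₀)
  obtain ⟨C, hC, hSC⟩ := exists_rpowSum_shiftedDeriv_zeros a b S hS_spec
  have hlt := card_lt_of_forall_rpowSum_eq_zero (shiftedDerivExp_injective hb)
    (exists_rpowSum_shiftedDeriv_ne_zero hnz ⟨t₀, ht₀, hz⟩) (insert t₀ (C \ S)) (by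
      simp only [Finset.forall_mem_insert]
      exact ⟨⟨ht₀, hderiv_t₀⟩, fun t ht => hC t (Finset.mem_sdiff.1 ht).1⟩)
  rw [Finset.card_insert_of_notMem (by simp [ht₀S])] at hlt
  omega
end

section
/- Let $\Phi : \mathbb{R} \to \mathbb{R}$ be an even function of class $C^3$ with $\Phi'''(x) \geq 0$ for all $x \geq 0$. Then for every $a, b > 0$, the function $h(x) = \int_{-b}^{b}\int_{-a}^{a} \Phi(u + \sqrt{x}\, v)\, du\, dv$ is convex on $[0,\infty)$. -/
/-! The inner integral `G s = ∫_{-a}^{a} Φ (u + s) du` is even with `G' = P`,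
`P s = Φ (s + a) - Φ (s - a)`. As `Φ''` is even and increasing on `[0, ∞)`,
`P'' s = Φ'' (s + a) - Φ'' (s - a) ≥ 0` for `s ≥ 0`; with `P 0 = 0` this makes `P s / s`
increasing on `(0, ∞)`. The derivative of `x ↦ G √x` is `P √x / (2 √x)`, so `G ∘ √` is convex on
`[0, ∞)`. By evenness `G (√x * v) = G √(v² x)`, and convexity survives integration in `v`. -/

open Real Set intervalIntegral MeasureTheory

namespace Function

variable {f : ℝ → ℝ}

theorem Even.deriv (hf : f.Even) : (deriv f).Odd := fun x => by
  have := congrArg (_root_.deriv · (-x)) (funext hf : (fun y => f (-y)) = f)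
  simp only [deriv_comp_neg, neg_neg] at this
  linarith

theorem Odd.deriv (hf : f.Odd) : (deriv f).Even := fun x => by
  have := congrArg (_root_.deriv · (-x)) (funext hf : (fun y => f (-y)) = fun y => -f y)
  simpa only [deriv_comp_neg, neg_neg, deriv.fun_neg, neg_inj] using this.symm

theorem Even.le_of_abs_le {β : Type*} [Preorder β] {g : ℝ → β} (hg : g.Even)
    (hmono : MonotoneOn g (Ici 0)) {y z : ℝ} (h : |y| ≤ |z|) : g y ≤ g z := by
  have habs : ∀ x, g |x| = g x := fun x => by
    rcases abs_choice x with hx | hx <;> rw [hx]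
    exact hg x
  rw [← habs y, ← habs z]
  exact hmono (abs_nonneg y) (abs_nonneg z) h

theorem Even.integral_comp_add (hf : f.Even) (a : ℝ) :
    (fun s => ∫ u in (-a)..a, f (u + s)).Even := fun s => by
  have := integral_comp_neg (a := -a) (b := a) (fun u => f (u + -s))
  simp only [neg_neg] at this
  simp only [← this, ← hf (-_ + -s), neg_add, neg_neg]

end Function

theorem hasDerivAt_integral_comp_add {f : ℝ → ℝ} (hf : Continuous f) (c d s : ℝ) :
    HasDerivAt (fun s => ∫ u in c..d, f (u + s)) (f (d + s) - f (c + s)) s := by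
  set F := fun x => ∫ t in (0 : ℝ)..x, f t
  have hF : ∀ x, HasDerivAt F (f x) x := fun x => (hf.integral_hasStrictDerivAt 0 x).hasDerivAt
  have hshift : (fun s => ∫ u in c..d, f (u + s)) = fun s => F (d + s) - F (c + s) := by
    funext s
    rw [integral_comp_add_right, integral_eq_sub_of_hasDerivAt (fun x _ => hF x)
      (hf.intervalIntegrable _ _), add_comm d, add_comm c]
  rw [hshift]
  exact ((hF _).comp_const_add d s).sub ((hF _).comp_const_add c s)

theorem convexOn_Ici_comp_add_sub_comp_sub {f f' f'' : ℝ → ℝ} (hf : ∀ x, HasDerivAt f (f' x) x)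
    (hf' : ∀ x, HasDerivAt f' (f'' x) x) (heven : f''.Even) (hmono : MonotoneOn f'' (Ici 0))
    {a : ℝ} (ha : 0 ≤ a) : ConvexOn ℝ (Ici 0) (fun s => f (s + a) - f (s - a)) := by
  have hcont : Continuous f := continuous_iff_continuousAt.2 fun x => (hf x).continuousAt
  refine convexOn_of_hasDerivWithinAt2_nonneg (f' := fun s => f' (s + a) - f' (s - a))
    (f'' := fun s => f'' (s + a) - f'' (s - a)) (convex_Ici 0) (by fun_prop)
    (fun x _ => ?_) (fun x _ => ?_) (fun x hx => ?_)
  · exact (((hf _).comp_add_const x a).sub ((hf _).comp_sub_const x a)).hasDerivWithinAt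
  · exact (((hf' _).comp_add_const x a).sub ((hf' _).comp_sub_const x a)).hasDerivWithinAt
  · rw [interior_Ici, mem_Ioi] at hx
    have : |x - a| ≤ |x + a| := by
      rw [abs_of_nonneg (by linarith : 0 ≤ x + a), abs_sub_le_iff]
      constructor <;> linarith
    exact sub_nonneg.2 (heven.le_of_abs_le hmono this)

theorem ConvexOn.monotoneOn_div_self {P : ℝ → ℝ} (hP : ConvexOn ℝ (Ici 0) P) (h0 : P 0 = 0) :
    MonotoneOn (fun t => P t / t) (Ioi 0) := fun x hx y hy hxy => by
  simpa [h0] using hP.secant_mono self_mem_Ici (mem_Ici_of_Ioi hx) (mem_Ici_of_Ioi hy)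
    (ne_of_gt hx) (ne_of_gt hy) hxy

theorem convexOn_comp_sqrt {g g' : ℝ → ℝ} (hg : ∀ s, HasDerivAt g (g' s) s)
    (hmono : MonotoneOn (fun s => g' s / s) (Ioi 0)) : ConvexOn ℝ (Ici 0) (fun x => g √x) := by
  have hderiv : ∀ x ∈ Ioi (0 : ℝ), HasDerivAt (fun x => g √x) (g' √x / √x / 2) x := fun x hx => by
    have hsx : √x ≠ 0 := (sqrt_pos.2 hx).ne'
    exact ((hg √x).comp x (hasDerivAt_sqrt (ne_of_gt hx))).congr_deriv (by field_simp)
  have hcont : Continuous g := continuous_iff_continuousAt.2 fun x => (hg x).continuousAt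
  refine MonotoneOn.convexOn_of_deriv (convex_Ici 0) (by fun_prop) ?_ ?_ <;> rw [interior_Ici]
  · exact fun x hx => (hderiv x hx).differentiableAt.differentiableWithinAt
  · refine MonotoneOn.congr ?_ fun x hx => (hderiv x hx).deriv.symm
    exact fun x hx y hy h => div_le_div_of_nonneg_right
      (hmono (sqrt_pos.2 hx) (sqrt_pos.2 hy) (sqrt_le_sqrt h)) zero_le_two

theorem convexOn_comp_sqrt_mul {g : ℝ → ℝ} (hg : g.Even)
    (hconv : ConvexOn ℝ (Ici 0) (fun x => g √x)) (v : ℝ) : ConvexOn ℝ (Ici 0) (fun x => g (√x * v)) := by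
  refine ((hconv.comp_linearMap (LinearMap.mulLeft ℝ (v ^ 2))).subset
    (fun x hx => mul_nonneg (sq_nonneg v) hx) (convex_Ici 0)).congr fun x hx => ?_
  have : √(v ^ 2 * x) = |√x * v| := by
    rw [sqrt_mul (sq_nonneg v), sqrt_sq_eq_abs, abs_mul, abs_of_nonneg (sqrt_nonneg x), mul_comm]
  rcases abs_choice (√x * v) with h | h <;> simp [this, h, hg _]

/-- If `Φ` is an even `C³` function with `Φ''' ≥ 0` on `[0,∞)`, then
`h(x) = ∫_{-b}^b ∫_{-a}^a Φ(u + √x v) du dv` is convex on `[0,∞)`. -/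
theorem stmt_10 (Φ : ℝ → ℝ) (hΦ : ContDiff ℝ 3 Φ) (heven : ∀ x, Φ (-x) = Φ x)
    (hΦ''' : ∀ x : ℝ, 0 ≤ x → 0 ≤ deriv^[3] Φ x)
    (a b : ℝ) (ha : 0 < a) (hb : 0 < b)
    (h : ℝ → ℝ)
    (hh : ∀ x : ℝ, 0 ≤ x →
      h x = ∫ v in (-b)..b, ∫ u in (-a)..a, Φ (u + Real.sqrt x * v)) :
    ConvexOn ℝ (Set.Ici 0) h := by
  have hΦeven : Φ.Even := heven
  set G := fun s => ∫ u in (-a)..a, Φ (u + s)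
  have hdiff : ∀ k < 3, Differentiable ℝ (deriv^[k] Φ) := fun k hk => by
    simpa only [iteratedDeriv_eq_iterate] using
      hΦ.differentiable_iteratedDeriv k (by exact_mod_cast hk)
  have hΦ''_mono : MonotoneOn (deriv^[2] Φ) (Ici 0) := by
    refine monotoneOn_of_deriv_nonneg (convex_Ici 0) (hdiff 2 (by norm_num)).continuous.continuousOn
      (hdiff 2 (by norm_num)).differentiableOn fun x hx => ?_
    rw [← Function.iterate_succ_apply' deriv]
    exact hΦ''' x (interior_subset hx)
  have hP : ConvexOn ℝ (Ici 0) (fun s => Φ (s + a) - Φ (s - a)) :=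
    convexOn_Ici_comp_add_sub_comp_sub (fun x => (hdiff 0 (by norm_num) x).hasDerivAt)
      (fun x => (hdiff 1 (by norm_num) x).hasDerivAt) hΦeven.deriv.deriv
      hΦ''_mono ha.le
  have hG : ∀ s, HasDerivAt G (Φ (s + a) - Φ (s - a)) s := fun s => by
    simpa only [add_comm _ s, ← sub_eq_add_neg] using
      hasDerivAt_integral_comp_add hΦ.continuous (-a) a s
  have hGsqrt : ConvexOn ℝ (Ici 0) (fun x => G √x) :=
    convexOn_comp_sqrt hG (hP.monotoneOn_div_self (by simp [heven a]))
  have hGcont : Continuous G := continuous_iff_continuousAt.2 fun s => (hG s).continuousAt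
  have hGv : ∀ v, ConvexOn ℝ (Ici 0) (fun x => G (√x * v)) :=
    convexOn_comp_sqrt_mul (hΦeven.integral_comp_add a) hGsqrt
  have hGv_int : ∀ x, IntegrableOn (fun v => G (√x * v)) (Ioc (-b) b) := fun x =>
    ((hGcont.comp (continuous_const.mul continuous_id)).intervalIntegrable (μ := volume) _ _).1
  refine (integral_convexOn_of_integrand_ae (convex_Ici 0) (ae_of_all _ hGv)
    fun x _ => hGv_int x).congr fun x hx => ?_
  rw [hh x hx, integral_of_le (by linarith)]
end
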